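/- arXiv:0710.3250 — 2 statements merged into one kernel-verified Lean document; each statement's English description precedes it below -/
import Mathlib

section
/- Let K be a field of characteristic zero. Then the Heisenberg algebra H_1 = K⟨A,B⟩/⟨AB − BA − 1⟩ over K is a simple ring: its only two-sided ideals are the zero ideal and the whole algebra. -/
noncomputable section

open Classical in
/-- The `q`-integer `{n}_q = (qⁿ − 1)/(q − 1)` for `q ≠ 1`, and `{n}_q = n·1_K` for `q = 1`. -/
def qInt (K : Type*) [Field K] (q : K) (n : ℤ) : K :=
  if q = 1 then (n : K) else (q ^ n - 1) / (q - 1)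

/-- The defining relation `AB = q·BA + 1` of the `q`-deformed Heisenberg algebra,
imposed on the free algebra on two generators. -/
inductive qHeisRel (K : Type*) [Field K] (q : K) :
    FreeAlgebra K (Fin 2) → FreeAlgebra K (Fin 2) → Prop
  | rel : qHeisRel K q (FreeAlgebra.ι K 0 * FreeAlgebra.ι K 1)
      (q • (FreeAlgebra.ι K 1 * FreeAlgebra.ι K 0) + 1)

/-- The `q`-deformed Heisenberg algebra `H_q = K⟨A,B⟩/⟨AB − qBA − 1⟩`. -/
abbrev qHeis (K : Type*) [Field K] (q : K) : Type _ := RingQuot (qHeisRel K q)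

/-- The generator `A` of `H_q`. -/
def qA (K : Type*) [Field K] (q : K) : qHeis K q :=
  RingQuot.mkAlgHom K (qHeisRel K q) (FreeAlgebra.ι K 0)

/-- The generator `B` of `H_q`. -/
def qB (K : Type*) [Field K] (q : K) : qHeis K q :=
  RingQuot.mkAlgHom K (qHeisRel K q) (FreeAlgebra.ι K 1)

/-!
Every element of `H₁` is a normally ordered expression `∑ᵢ Bⁱ pᵢ(A)` with `pᵢ ∈ K[X]`. On such
expressions the inner derivation `[A, -]` acts as `∂/∂B`, and `[-, B]` acts on `p(A)` as
`d/dA`. A two-sided ideal is stable under both, so differentiating a nonzero normally ordered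
element of an ideal as often as its degree in `B`, and then as often as the degree in `A` of
what remains, leaves a nonzero scalar: factorials do not vanish in characteristic zero.
Linear independence of the monomials `Bⁱ Aʲ` is never needed: it suffices that a nonzero
element has some nonzero normally ordered representative.
-/

open Polynomial

theorem Polynomial.iterate_derivative_natDegree {R : Type*} [Semiring R] (p : R[X]) :
    derivative^[p.natDegree] p = C (p.natDegree.factorial • p.leadingCoeff) := by
  have h : (derivative^[p.natDegree] p).natDegree = 0 := by
    simpa using natDegree_iterate_derivative p p.natDegree
  rw [eq_C_of_natDegree_eq_zero h, coeff_iterate_derivative, zero_add, Nat.descFactorial_self,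
    leadingCoeff]

section CanonicalCommutation

variable {K R : Type*} [CommSemiring K] [Ring R] [Algebra K R] {a b : R}

theorem mul_aeval_sub_aeval_mul (hab : a * b - b * a = 1) (q : K[X]) :
    a * aeval b q - aeval b q * a = aeval b (derivative q) := by
  induction q using Polynomial.induction_on with
  | C c => simp [Algebra.commutes]
  | add p q hp hq => simp only [map_add, mul_add, add_mul, ← hp, ← hq]; abel
  | monomial n c ih =>
    have leibniz : ∀ u, a * (u * b) - u * b * a = (a * u - u * a) * b + u * (a * b - b * a) := by
      intro u; noncomm_ring
    rw [pow_succ, ← mul_assoc, map_mul, aeval_X, leibniz, ih, hab, mul_one,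
      derivative_mul (f := C c * X ^ n), derivative_X, mul_one, map_add, map_mul (aeval b) _ X,
      aeval_X]

theorem aeval_mul_sub_mul_aeval (hab : a * b - b * a = 1) (q : K[X]) :
    aeval a q * b - b * aeval a q = aeval a (derivative q) := by
  have hop : MulOpposite.op b * MulOpposite.op a - MulOpposite.op a * MulOpposite.op b = 1 := by
    rw [← MulOpposite.op_mul, ← MulOpposite.op_mul, ← MulOpposite.op_sub, hab,
      MulOpposite.op_one]
  apply MulOpposite.op_injective
  simpa [aeval_op_apply] using mul_aeval_sub_aeval_mul hop q

theorem mul_pow_sub_pow_mul (hab : a * b - b * a = 1) (n : ℕ) :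
    a * b ^ n - b ^ n * a = n * b ^ (n - 1) := by
  simpa [derivative_X_pow] using mul_aeval_sub_aeval_mul (K := ℕ) hab (X ^ n)

variable (a b) in
/-- `∑ᵢ pᵢ Xⁱ ↦ ∑ᵢ bⁱ pᵢ(a)`: evaluation with every `b` written to the left of every `a`. -/
def orderedEval : K[X][X] →ₗ[K] R :=
  lsum fun i => LinearMap.mulLeft K (b ^ i) ∘ₗ (aeval a).toLinearMap

theorem orderedEval_monomial (i : ℕ) (q : K[X]) :
    orderedEval a b (monomial i q) = b ^ i * aeval a q := by
  simp [orderedEval, sum_monomial_index]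

theorem orderedEval_C (q : K[X]) : orderedEval a b (C q) = aeval a q := by
  rw [← monomial_zero_left, orderedEval_monomial, pow_zero, one_mul]

theorem orderedEval_X_mul (p : K[X][X]) : orderedEval a b (X * p) = b * orderedEval a b p := by
  induction p using Polynomial.induction_on' with
  | add p q hp hq => rw [mul_add, map_add, hp, hq, map_add, mul_add]
  | monomial i q =>
    rw [X_mul_monomial, orderedEval_monomial, orderedEval_monomial, pow_succ', mul_assoc]

theorem orderedEval_mul_C_X (p : K[X][X]) :
    orderedEval a b (p * C X) = orderedEval a b p * a := by
  induction p using Polynomial.induction_on' with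
  | add p q hp hq => rw [add_mul, map_add, hp, hq, map_add, add_mul]
  | monomial i q =>
    rw [monomial_mul_C, orderedEval_monomial, orderedEval_monomial, map_mul, aeval_X, mul_assoc]

theorem mul_orderedEval_sub_orderedEval_mul (hab : a * b - b * a = 1) (p : K[X][X]) :
    a * orderedEval a b p - orderedEval a b p * a = orderedEval a b (derivative p) := by
  induction p using Polynomial.induction_on' with
  | add p q hp hq => rw [map_add, mul_add, add_mul, derivative_add, map_add, ← hp, ← hq]; abel
  | monomial i q =>
    have hcomm : aeval a q * a = a * aeval a q := by
      simpa only [map_mul, aeval_X] using congrArg (aeval a) (mul_comm q X)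
    rw [derivative_monomial, orderedEval_monomial, orderedEval_monomial, mul_assoc, hcomm,
      ← mul_assoc, ← mul_assoc, ← sub_mul, mul_pow_sub_pow_mul hab, map_mul, map_natCast,
      (Nat.cast_commute _ _).eq, mul_assoc, (Nat.cast_commute i _).eq]

end CanonicalCommutation

theorem TwoSidedIdeal.one_mem_of_isUnit_mem {R : Type*} [Ring R] {I : TwoSidedIdeal R} {u : R}
    (hu : IsUnit u) (h : u ∈ I) : (1 : R) ∈ I := by
  obtain ⟨u, rfl⟩ := hu
  simpa using I.mul_mem_left (↑u⁻¹) _ h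

section IdealsOfCanonicalPairs

variable {K R : Type*} [Field K] [CharZero K] [Ring R] [Algebra K R] {a b : R}
  {I : TwoSidedIdeal R}

theorem one_mem_of_aeval_mem (hab : a * b - b * a = 1) {q : K[X]} (hq : q ≠ 0)
    (h : aeval a q ∈ I) : (1 : R) ∈ I := by
  have hiter : ∀ n, aeval a (derivative^[n] q) ∈ I := by
    intro n
    induction n with
    | zero => exact h
    | succ n ih =>
      rw [Function.iterate_succ_apply', ← aeval_mul_sub_mul_aeval hab]
      exact I.sub_mem (I.mul_mem_right _ _ ih) (I.mul_mem_left _ _ ih)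
  have hconst := hiter q.natDegree
  rw [iterate_derivative_natDegree, aeval_C] at hconst
  have hc : q.natDegree.factorial • q.leadingCoeff ≠ 0 :=
    smul_ne_zero (Nat.factorial_ne_zero _) (leadingCoeff_ne_zero.2 hq)
  exact TwoSidedIdeal.one_mem_of_isUnit_mem ((isUnit_iff_ne_zero.2 hc).map _) hconst

theorem one_mem_of_orderedEval_mem (hab : a * b - b * a = 1) {p : K[X][X]} (hp : p ≠ 0)
    (h : orderedEval a b p ∈ I) : (1 : R) ∈ I := by
  have hiter : ∀ n, orderedEval a b (derivative^[n] p) ∈ I := by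
    intro n
    induction n with
    | zero => exact h
    | succ n ih =>
      rw [Function.iterate_succ_apply', ← mul_orderedEval_sub_orderedEval_mul hab]
      exact I.sub_mem (I.mul_mem_left _ _ ih) (I.mul_mem_right _ _ ih)
  have hconst := hiter p.natDegree
  rw [iterate_derivative_natDegree, orderedEval_C] at hconst
  exact one_mem_of_aeval_mem hab
    (smul_ne_zero (Nat.factorial_ne_zero _) (leadingCoeff_ne_zero.2 hp)) hconst

end IdealsOfCanonicalPairs

section Heisenberg

variable {K : Type*} [Field K]

theorem qA_mul_qB_sub_qB_mul_qA : qA K 1 * qB K 1 - qB K 1 * qA K 1 = 1 := by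
  have h := RingQuot.mkAlgHom_rel K (qHeisRel.rel (K := K) (q := 1))
  rw [one_smul, map_add, map_mul, map_mul, map_one] at h
  rw [qA, qB, h, add_sub_cancel_left]

theorem adjoin_qA_qB_eq_top (q : K) : Algebra.adjoin K {qA K q, qB K q} = ⊤ := by
  have hgen : {qA K q, qB K q} =
      RingQuot.mkAlgHom K (qHeisRel K q) '' Set.range (FreeAlgebra.ι K) := by
    ext x
    simp [qA, qB, Fin.exists_fin_two, eq_comm]
  rw [hgen, Algebra.adjoin_image, FreeAlgebra.adjoin_range_ι, Algebra.map_top,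
    AlgHom.range_eq_top]
  exact RingQuot.mkAlgHom_surjective K _

theorem orderedEval_qA_qB_surjective :
    Function.Surjective (orderedEval (K := K) (qA K 1) (qB K 1)) := by
  set φ := orderedEval (K := K) (qA K 1) (qB K 1)
  have hclosed : ∀ x, ∀ y ∈ LinearMap.range φ, x * y ∈ LinearMap.range φ := by
    intro x
    have hx : x ∈ Algebra.adjoin K {qA K 1, qB K 1} := adjoin_qA_qB_eq_top (K := K) 1 ▸ trivial
    induction hx using Algebra.adjoin_induction with
    | mem x hx =>
      rintro _ ⟨p, rfl⟩
      rcases hx with rfl | rfl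
      · refine ⟨p * C X + derivative p, ?_⟩
        rw [map_add, orderedEval_mul_C_X, ← mul_orderedEval_sub_orderedEval_mul
          qA_mul_qB_sub_qB_mul_qA, add_sub_cancel]
      · exact ⟨X * p, orderedEval_X_mul p⟩
    | algebraMap c =>
      intro y hy
      rw [← Algebra.smul_def]
      exact Submodule.smul_mem _ c hy
    | add x x' _ _ hx hx' =>
      intro y hy
      rw [add_mul]
      exact add_mem (hx y hy) (hx' y hy)
    | mul x x' _ _ hx hx' =>
      intro y hy
      rw [mul_assoc]
      exact hx _ (hx' y hy)
  intro x
  simpa using hclosed x 1 ⟨C 1, by rw [orderedEval_C, map_one]⟩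

def qHeisOneRep : qHeis K 1 →ₐ[K] Module.End K K[X] :=
  RingQuot.liftAlgHom K ⟨FreeAlgebra.lift K ![derivative, LinearMap.mulLeft K X], by
    rintro _ _ ⟨⟩
    refine LinearMap.ext fun p => ?_
    simp [derivative_mul, add_comm]⟩

instance : Nontrivial (qHeis K 1) :=
  (qHeisOneRep (K := K)).toRingHom.domain_nontrivial

end Heisenberg

/-- Over a field `K` of characteristic zero, the Heisenberg algebra
`H₁ = K⟨A,B⟩/⟨AB − BA − 1⟩` (the `q`-deformed Heisenberg algebra with `q = 1`)
is a simple ring: its only two-sided ideals are `⊥` and `⊤`. -/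
theorem heisenberg_algebra_isSimpleRing
    {K : Type*} [Field K] [CharZero K] :
    IsSimpleRing (qHeis K 1) := by
  refine .of_eq_bot_or_eq_top fun I => or_iff_not_imp_left.2 fun hI => ?_
  obtain ⟨x, hxI, hx⟩ := SetLike.exists_of_lt (bot_lt_iff_ne_bot.2 hI)
  obtain ⟨p, rfl⟩ := orderedEval_qA_qB_surjective x
  rw [← I.one_mem_iff]
  exact one_mem_of_orderedEval_mem qA_mul_qB_sub_qB_mul_qA (by rintro rfl; simp at hx) hxI
end
end

section
/- Let K be a field and q ∈ K with q ≠ 0 and {n}_q ≠ 0 for every nonzero integer n. Then the representation of the q-deformed Heisenberg algebra H_q on the space L of formal Laurent series, given by the unital K-algebra homomorphism H_q → End_K(L) sending A to D_q and B to M, is faithful (injective). -/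
noncomputable section

/-- Multiplication by `t` on the space `L` of formal Laurent series `Σ aₙ tⁿ`,
realized as the space of functions `ℤ → K`: `(M f)(n) = f(n−1)`. -/
def Mop (K : Type*) [Field K] : Module.End K (ℤ → K) where
  toFun f := fun n => f (n - 1)
  map_add' _ _ := rfl
  map_smul' _ _ := rfl

/-- The `q`-difference operator `D_q` on Laurent series: `(D_q f)(n) = {n+1}_q · f(n+1)`. -/
def Dq (K : Type*) [Field K] (q : K) : Module.End K (ℤ → K) where
  toFun f := fun n => qInt K q (n + 1) * f (n + 1)
  map_add' f g := by funext n; simp [mul_add]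
  map_smul' c f := by funext n; simp [Pi.smul_apply, smul_eq_mul]; ring

/-!
The ordered monomials `Bⁱ Aʲ` span `H_q`, because the relation `AB = q BA + 1` moves every `A`
to the right of every `B`. Their images `Mⁱ D_qʲ` are linearly independent: applied to the
monomial `tʲ` and read off at `tⁱ`, the operator `M^{i'} D_q^{j'}` contributes only if
`i' - j' = i - j`, and then with the factor `{i - i' + 1}_q ⋯ {i - i' + j'}_q`. This factor
contains `{0}_q = 0` when `j' > j` and is the nonzero `q`-factorial `{1}_q ⋯ {j}_q` when
`(i', j') = (i, j)`, so an induction on `j` kills all coefficients.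
-/

section Spanning

variable (K : Type*) [Field K] (q : K)

theorem qA_mul_qB : qA K q * qB K q = q • (qB K q * qA K q) + 1 := by
  simpa [qA, qB] using RingQuot.mkAlgHom_rel K (qHeisRel.rel (K := K) (q := q))

def qMonomial (p : ℕ × ℕ) : qHeis K q := qB K q ^ p.1 * qA K q ^ p.2

variable {K q}

theorem qB_mul_mem_span_qMonomial {s : qHeis K q}
    (hs : s ∈ Submodule.span K (Set.range (qMonomial K q))) :
    qB K q * s ∈ Submodule.span K (Set.range (qMonomial K q)) := by
  induction hs using Submodule.span_induction with
  | mem x hx =>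
    obtain ⟨⟨i, j⟩, rfl⟩ := hx
    refine Submodule.subset_span ⟨(i + 1, j), ?_⟩
    simp only [qMonomial, pow_succ', mul_assoc]
  | zero => simp
  | add x y _ _ hx hy => rw [mul_add]; exact Submodule.add_mem _ hx hy
  | smul a x _ hx => rw [mul_smul_comm]; exact Submodule.smul_mem _ _ hx

theorem qA_mul_mem_span_qMonomial {s : qHeis K q}
    (hs : s ∈ Submodule.span K (Set.range (qMonomial K q))) :
    qA K q * s ∈ Submodule.span K (Set.range (qMonomial K q)) := by
  induction hs using Submodule.span_induction with
  | mem x hx =>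
    obtain ⟨⟨i, j⟩, rfl⟩ := hx
    induction i with
    | zero => exact Submodule.subset_span ⟨(0, j + 1), by simp [qMonomial, pow_succ']⟩
    | succ i ih =>
      have hmove : qA K q * qMonomial K q (i + 1, j) =
          q • (qB K q * (qA K q * qMonomial K q (i, j))) + qMonomial K q (i, j) := by
        simp only [qMonomial, pow_succ', ← mul_assoc, qA_mul_qB, add_mul, smul_mul_assoc,
          one_mul]
      rw [hmove]
      exact Submodule.add_mem _ (Submodule.smul_mem _ _ (qB_mul_mem_span_qMonomial ih))
        (Submodule.subset_span ⟨(i, j), rfl⟩)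
  | zero => simp
  | add x y _ _ hx hy => rw [mul_add]; exact Submodule.add_mem _ hx hy
  | smul a x _ hx => rw [mul_smul_comm]; exact Submodule.smul_mem _ _ hx

variable (K q)

theorem span_range_qMonomial : Submodule.span K (Set.range (qMonomial K q)) = ⊤ := by
  set S := Submodule.span K (Set.range (qMonomial K q))
  have hstable : ∀ y : FreeAlgebra K (Fin 2), ∀ s ∈ S,
      RingQuot.mkAlgHom K (qHeisRel K q) y * s ∈ S := by
    intro y
    induction y using FreeAlgebra.induction with
    | grade0 r =>
      intro s hs
      rw [AlgHom.commutes, Algebra.algebraMap_eq_smul_one, smul_mul_assoc, one_mul]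
      exact S.smul_mem _ hs
    | grade1 x =>
      fin_cases x
      · exact fun s hs => qA_mul_mem_span_qMonomial hs
      · exact fun s hs => qB_mul_mem_span_qMonomial hs
    | mul a b ha hb =>
      intro s hs
      rw [map_mul, mul_assoc]
      exact ha _ (hb _ hs)
    | add a b ha hb =>
      intro s hs
      rw [map_add, add_mul]
      exact S.add_mem (ha _ hs) (hb _ hs)
  have hone : (1 : qHeis K q) ∈ S := Submodule.subset_span ⟨(0, 0), by simp [qMonomial]⟩
  refine Submodule.eq_top_iff'.2 fun x => ?_
  obtain ⟨y, rfl⟩ := RingQuot.mkAlgHom_surjective K (qHeisRel K q) x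
  simpa using hstable y 1 hone

end Spanning

section Independence

variable {K : Type*} [Field K] (q : K)

theorem qInt_zero : qInt K q 0 = 0 := by
  unfold qInt; split_ifs <;> simp

theorem Mop_pow_apply (i : ℕ) (f : ℤ → K) (n : ℤ) : (Mop K ^ i) f n = f (n - i) := by
  induction i generalizing f with
  | zero => simp
  | succ i ih =>
    rw [pow_succ, Module.End.mul_apply, ih]
    simp only [Mop, LinearMap.coe_mk, AddHom.coe_mk]
    congr 1
    push_cast
    ring

theorem Dq_pow_apply (j : ℕ) (f : ℤ → K) (n : ℤ) :
    (Dq K q ^ j) f n = (∏ k ∈ Finset.range j, qInt K q (n + k + 1)) * f (n + j) := by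
  induction j generalizing f with
  | zero => simp
  | succ j ih =>
    rw [pow_succ, Module.End.mul_apply, ih, Finset.prod_range_succ, mul_assoc]
    simp only [Dq, LinearMap.coe_mk, AddHom.coe_mk]
    push_cast
    ring_nf

theorem prod_qInt_eq_zero {n : ℤ} {j : ℕ} (hn : n < 0) (hnj : 0 ≤ n + j) :
    ∏ k ∈ Finset.range j, qInt K q (n + k + 1) = 0 := by
  refine Finset.prod_eq_zero (i := (-n - 1).toNat) (Finset.mem_range.2 (by omega)) ?_
  rw [Int.toNat_of_nonneg (by omega), show n + (-n - 1) + 1 = 0 by ring, qInt_zero]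

theorem Mop_pow_mul_Dq_pow_single_apply (i j : ℕ) (m n : ℤ) :
    (Mop K ^ i * Dq K q ^ j) (Pi.single m 1) n =
      if n - i + j = m then ∏ k ∈ Finset.range j, qInt K q (n - i + k + 1) else 0 := by
  rw [Module.End.mul_apply, Mop_pow_apply, Dq_pow_apply, Pi.single_apply]
  split_ifs <;> simp

theorem linearIndependent_Mop_pow_mul_Dq_pow (hqInt : ∀ k : ℕ, qInt K q (k + 1) ≠ 0) :
    LinearIndependent K (fun p : ℕ × ℕ => Mop K ^ p.1 * Dq K q ^ p.2) := by
  refine linearIndependent_iff'.2 fun s g hsum => ?_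
  suffices ∀ j i, (i, j) ∈ s → g (i, j) = 0 from fun p hp => this p.2 p.1 hp
  intro j
  induction j using Nat.strong_induction_on with
  | _ j ih =>
  intro i hij
  have hcoeff := congr_fun (LinearMap.congr_fun hsum (Pi.single (j : ℤ) 1)) (i : ℤ)
  simp only [LinearMap.sum_apply, Finset.sum_apply, LinearMap.smul_apply, Pi.smul_apply,
    smul_eq_mul, Mop_pow_mul_Dq_pow_single_apply, LinearMap.zero_apply, Pi.zero_apply]
    at hcoeff
  rw [Finset.sum_eq_single_of_mem (i, j) hij] at hcoeff
  · have hfact : ∏ k ∈ Finset.range j, qInt K q ((i : ℤ) - i + k + 1) ≠ 0 :=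
      Finset.prod_ne_zero_iff.2 fun k _ => by simpa using hqInt k
    simp only [sub_self, zero_add, if_true] at hcoeff hfact
    exact (mul_eq_zero.1 hcoeff).resolve_right hfact
  · rintro ⟨i', j'⟩ hp hne
    split_ifs with hshift
    · rcases lt_trichotomy j' j with hlt | rfl | hgt
      · rw [ih j' hlt i' hp, zero_mul]
      · obtain rfl : i' = i := by omega
        exact absurd rfl hne
      · rw [prod_qInt_eq_zero q (by omega) (by omega), mul_zero]
    · exact mul_zero _

end Independence

theorem qHeis_laurent_representation_faithful_general
    {K : Type*} [Field K] (q : K)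
    (hfree : ∀ n : ℤ, n ≠ 0 → qInt K q n ≠ 0) :
    ∀ φ : qHeis K q →ₐ[K] Module.End K (ℤ → K),
      φ (qA K q) = Dq K q → φ (qB K q) = Mop K → Function.Injective φ := by
  intro φ hA hB
  have hφ : φ.toLinearMap ∘ qMonomial K q = fun p => Mop K ^ p.1 * Dq K q ^ p.2 := by
    ext1 p
    simp [qMonomial, hA, hB]
  refine LinearMap.injective_of_linearIndependent (f := φ.toLinearMap)
    (span_range_qMonomial K q) ?_
  rw [hφ]
  exact linearIndependent_Mop_pow_mul_Dq_pow q fun k => hfree _ (by omega)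

/-- If `q ≠ 0` and `{n}_q ≠ 0` for every nonzero integer `n`, then the representation of
the `q`-deformed Heisenberg algebra `H_q` on the space `L` of formal Laurent series,
sending `A ↦ D_q` and `B ↦ M`, is faithful (injective). -/
theorem qHeis_laurent_representation_faithful
    {K : Type*} [Field K] (q : K) (hq : q ≠ 0)
    (hfree : ∀ n : ℤ, n ≠ 0 → qInt K q n ≠ 0) :
    ∀ φ : qHeis K q →ₐ[K] Module.End K (ℤ → K),
      φ (qA K q) = Dq K q → φ (qB K q) = Mop K → Function.Injective φ :=
  qHeis_laurent_representation_faithful_general q hfree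
end
end
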